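/- Under the 2NLin test distribution, for every i ∈ [K] and j ∈ [L] with π(j) ≠ i, one has (1/4)·Pr[x_i ≠ z_j] + (3/4)·Pr[y_j ≠ z_j] = 11/12. (In particular, nonmatching dictator assignments pass the 2NLin test with probability exactly 11/12.) -/
import Mathlib


open Finset

section Helpers
variable {I : Type*} [Fintype I] [DecidableEq I]

lemma card_w (a b : ZMod 3) :
    (univ.filter fun c : ZMod 3 => c ≠ a ∧ c ≠ b).card = if a = b then 2 else 1 := by
  revert a b; decide

lemma w_sum (a b : ZMod 3) :
    ∑ c : ZMod 3, (if c ≠ a ∧ c ≠ b then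
      (1 : ℝ) / (univ.filter fun c : ZMod 3 => c ≠ a ∧ c ≠ b).card else 0) = 1 := by
  rw [Finset.sum_ite, Finset.sum_const, Finset.sum_const_zero, add_zero, nsmul_eq_mul,
    card_w]
  by_cases h : a = b <;> simp [h]

lemma sum_pi (f : I → ZMod 3 → ℝ) :
    ∑ x : I → ZMod 3, ∏ m, f m (x m) = ∏ m, ∑ c, f m c := (Fintype.prod_sum _).symm

lemma sum_extract (f : I → ZMod 3 → ℝ) (h1 : ∀ m, ∑ c, f m c = 1) (j : I) (φ : ZMod 3 → ℝ) :
    ∑ z : I → ZMod 3, (∏ m, f m (z m)) * φ (z j) = ∑ c, f j c * φ c := by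
  calc ∑ z : I → ZMod 3, (∏ m, f m (z m)) * φ (z j)
      = ∑ z : I → ZMod 3, ∏ m, (f m (z m) * if m = j then φ (z m) else 1) := by
        refine Finset.sum_congr rfl fun z _ => ?_
        rw [Finset.prod_mul_distrib, Fintype.prod_ite_eq' j (fun m => φ (z m))]
    _ = ∏ m, ∑ c, (f m c * if m = j then φ c else 1) :=
        sum_pi (fun m c => f m c * if m = j then φ c else 1)
    _ = ∑ c, f j c * φ c := by
        rw [Fintype.prod_eq_single j]
        · simp
        · intro m hm; simp [hm, h1 m]

lemma sum_coord (j : I) (g : ZMod 3 → ℝ) :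
    ∑ y : I → ZMod 3, g (y j) = 3 ^ (Fintype.card I - 1) * ∑ b, g b := by
  calc ∑ y : I → ZMod 3, g (y j)
      = ∑ y : I → ZMod 3, ∏ m, (if m = j then g (y m) else 1) := by
        refine Finset.sum_congr rfl fun y _ => ?_
        rw [Fintype.prod_ite_eq' j (fun m => g (y m))]
    _ = ∏ m, ∑ c : ZMod 3, (if m = j then g c else 1) :=
        sum_pi (fun m c => if m = j then g c else 1)
    _ = (∑ c, g c) * ∏ m ∈ univ.erase j, (3:ℝ) := by
        rw [← Finset.mul_prod_erase univ _ (Finset.mem_univ j)]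
        congr 1
        · simp
        · refine Finset.prod_congr rfl fun m hm => ?_
          simp [Finset.ne_of_mem_erase hm, Finset.card_univ, ZMod.card]
    _ = 3 ^ (Fintype.card I - 1) * ∑ b, g b := by
        rw [Finset.prod_const, Finset.card_erase_of_mem (Finset.mem_univ j),
          Finset.card_univ, mul_comm]

lemma sum_coord2 {i k : I} (hik : i ≠ k) (g : ZMod 3 → ZMod 3 → ℝ) :
    ∑ x : I → ZMod 3, g (x i) (x k) = 3 ^ (Fintype.card I - 2) * ∑ v, ∑ a, g v a := by
  classical
  set h : ZMod 3 → ZMod 3 → I → ZMod 3 → ℝ := fun v a m c =>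
    if m = i then (if c = v then 1 else 0)
    else if m = k then (if c = a then 1 else 0) else 1 with hh
  have hk' : k ∈ univ.erase i := Finset.mem_erase.2 ⟨Ne.symm hik, Finset.mem_univ k⟩
  have prod_h : ∀ (v a : ZMod 3) (x : I → ZMod 3),
      ∏ m, h v a m (x m)
        = (if x i = v then (1:ℝ) else 0) * (if x k = a then (1:ℝ) else 0) := by
    intro v a x
    rw [← Finset.mul_prod_erase univ _ (Finset.mem_univ i),
      ← Finset.mul_prod_erase _ _ hk']
    have h1 : h v a i (x i) = (if x i = v then (1:ℝ) else 0) := by simp [hh]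
    have h2 : h v a k (x k) = (if x k = a then (1:ℝ) else 0) := by
      simp [hh, Ne.symm hik]
    have h3 : ∏ m ∈ (univ.erase i).erase k, h v a m (x m) = 1 := by
      refine Finset.prod_eq_one fun m hm => ?_
      have hm1 : m ≠ k := Finset.ne_of_mem_erase hm
      have hm2 : m ≠ i := Finset.ne_of_mem_erase (Finset.mem_of_mem_erase hm)
      simp [hh, hm1, hm2]
    rw [h1, h2, h3, mul_one]
  have key : ∀ x : I → ZMod 3,
      g (x i) (x k) = ∑ v, ∑ a, (∏ m, h v a m (x m)) * g v a := by
    intro x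
    simp only [prod_h]
    simp [ite_mul, zero_mul, one_mul, Finset.sum_ite_eq, Finset.mem_univ]
  calc ∑ x : I → ZMod 3, g (x i) (x k)
      = ∑ x : I → ZMod 3, ∑ v, ∑ a, (∏ m, h v a m (x m)) * g v a :=
        Finset.sum_congr rfl fun x _ => key x
    _ = ∑ v, ∑ a, ∑ x : I → ZMod 3, (∏ m, h v a m (x m)) * g v a := by
        rw [Finset.sum_comm]
        exact Finset.sum_congr rfl fun v _ => Finset.sum_comm
    _ = ∑ v, ∑ a, (3 ^ (Fintype.card I - 2)) * g v a := by
        refine Finset.sum_congr rfl fun v _ => Finset.sum_congr rfl fun a _ => ?_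
        rw [← Finset.sum_mul]
        congr 1
        rw [sum_pi (h v a)]
        rw [← Finset.mul_prod_erase univ _ (Finset.mem_univ i),
          ← Finset.mul_prod_erase _ _ hk']
        have e1 : ∑ c : ZMod 3, h v a i c = 1 := by simp [hh]
        have e2 : ∑ c : ZMod 3, h v a k c = 1 := by simp [hh, Ne.symm hik]
        have e3 : ∏ m ∈ (univ.erase i).erase k, (∑ c : ZMod 3, h v a m c)
            = 3 ^ (Fintype.card I - 2) := by
          have : ∀ m ∈ (univ.erase i).erase k, (∑ c : ZMod 3, h v a m c) = 3 := by
            intro m hm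
            have hm1 : m ≠ k := Finset.ne_of_mem_erase hm
            have hm2 : m ≠ i := Finset.ne_of_mem_erase (Finset.mem_of_mem_erase hm)
            simp [hh, hm1, hm2, Finset.card_univ, ZMod.card]
          rw [Finset.prod_congr rfl this, Finset.prod_const,
            Finset.card_erase_of_mem hk', Finset.card_erase_of_mem (Finset.mem_univ i),
            Finset.card_univ]
          congr 1
        rw [e1, e2, e3, one_mul, one_mul]
    _ = 3 ^ (Fintype.card I - 2) * ∑ v, ∑ a, g v a := by
        rw [Finset.mul_sum]
        exact Finset.sum_congr rfl fun v _ => (Finset.mul_sum _ _ _).symm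

lemma ite_ne_sum (c : ZMod 3) : ∑ v : ZMod 3, (if v ≠ c then (1:ℝ) else 0) = 2 := by
  have h : ∀ v : ZMod 3, (if v ≠ c then (1:ℝ) else 0) = 1 - (if v = c then 1 else 0) := by
    intro v; by_cases h : v = c <;> simp [h]
  rw [Finset.sum_congr rfl fun v _ => h v, Finset.sum_sub_distrib, Finset.sum_const,
    Finset.sum_ite_eq' univ c (fun _ => (1:ℝ)), if_pos (Finset.mem_univ c),
    Finset.card_univ, ZMod.card]
  norm_num

lemma S18 : ∑ v : ZMod 3, ∑ a : ZMod 3, ∑ b : ZMod 3, ∑ c : ZMod 3,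
    (if c ≠ a ∧ c ≠ b then
      (1:ℝ) / (univ.filter fun c : ZMod 3 => c ≠ a ∧ c ≠ b).card else 0)
    * (if v ≠ c then (1:ℝ) else 0) = 18 := by
  calc ∑ v : ZMod 3, ∑ a : ZMod 3, ∑ b : ZMod 3, ∑ c : ZMod 3,
      (if c ≠ a ∧ c ≠ b then
        (1:ℝ) / (univ.filter fun c : ZMod 3 => c ≠ a ∧ c ≠ b).card else 0)
      * (if v ≠ c then (1:ℝ) else 0)
      = ∑ a : ZMod 3, ∑ b : ZMod 3, ∑ c : ZMod 3,
        (if c ≠ a ∧ c ≠ b then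
          (1:ℝ) / (univ.filter fun c : ZMod 3 => c ≠ a ∧ c ≠ b).card else 0) * 2 := by
        rw [Finset.sum_comm]
        refine Finset.sum_congr rfl fun a _ => ?_
        rw [Finset.sum_comm]
        refine Finset.sum_congr rfl fun b _ => ?_
        rw [Finset.sum_comm]
        refine Finset.sum_congr rfl fun c _ => ?_
        rw [← Finset.mul_sum, ite_ne_sum]
    _ = ∑ _a : ZMod 3, ∑ _b : ZMod 3, (2:ℝ) := by
        refine Finset.sum_congr rfl fun a _ => Finset.sum_congr rfl fun b _ => ?_
        rw [← Finset.sum_mul, w_sum, one_mul]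
    _ = 18 := by
        rw [Finset.sum_const, Finset.sum_const, Finset.card_univ, ZMod.card]
        norm_num

end Helpers


-- Probability of an event `E x y z` under the 2NLin test distribution with
-- parameters `d`, `K` (coordinates `j ∈ [L]`, `L = dK`, are encoded as pairs
-- `(i, j') ∈ Fin K × Fin d` with block `π(j) = i`): `x` is uniform on
-- `(ZMod 3)^K`, independently `y` is uniform on `(ZMod 3)^L`, and for each
-- coordinate `j`, `z_j` is drawn independently and uniformly from
-- `ZMod 3 \ {x_{π(j)}, y_j}`.
open Classical in
noncomputable def nlinPr (d K : ℕ)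
    (E : (Fin K → ZMod 3) → ((Fin K × Fin d) → ZMod 3) →
         ((Fin K × Fin d) → ZMod 3) → Prop) : ℝ :=
  (∑ x : Fin K → ZMod 3, ∑ y : (Fin K × Fin d) → ZMod 3,
    ∑ z : (Fin K × Fin d) → ZMod 3,
      (∏ j : Fin K × Fin d,
        (if z j ≠ x j.1 ∧ z j ≠ y j then
          (1 : ℝ) / (univ.filter fun c : ZMod 3 => c ≠ x j.1 ∧ c ≠ y j).card
        else 0))
      * (if E x y z then 1 else 0))
    / (3 ^ K * 3 ^ (d * K))

theorem nlin_nonmatching_dictators (d K : ℕ) (hd : 0 < d) (hK : 0 < K)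
    (i : Fin K) (j : Fin K × Fin d) (hij : j.1 ≠ i) :
    (1 / 4) * nlinPr d K (fun x _y z => x i ≠ z j)
      + (3 / 4) * nlinPr d K (fun _x y z => y j ≠ z j) = 11 / 12 := by
  have hden : (0:ℝ) < 3 ^ K * 3 ^ (d * K) := by positivity
  have hK2 : 2 ≤ K := by
    have h1 : Nontrivial (Fin K) := ⟨⟨j.1, i, hij⟩⟩
    have h2 := Fintype.one_lt_card (α := Fin K)
    rw [Fintype.card_fin] at h2
    omega
  have e2 : nlinPr d K (fun _x y z => y j ≠ z j) = 1 := by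
    unfold nlinPr
    rw [div_eq_one_iff_eq (ne_of_gt hden)]
    calc (∑ x : Fin K → ZMod 3, ∑ y : (Fin K × Fin d) → ZMod 3,
        ∑ z : (Fin K × Fin d) → ZMod 3,
          (∏ m : Fin K × Fin d,
            (if z m ≠ x m.1 ∧ z m ≠ y m then
              (1 : ℝ) / (univ.filter fun c : ZMod 3 => c ≠ x m.1 ∧ c ≠ y m).card
            else 0))
          * (@ite ℝ ((fun _x y z => y j ≠ z j) x y z) (Classical.propDecidable _) 1 0))
        = ∑ x : Fin K → ZMod 3, ∑ y : (Fin K × Fin d) → ZMod 3,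
          ∑ z : (Fin K × Fin d) → ZMod 3,
            ∏ m : Fin K × Fin d,
              (if z m ≠ x m.1 ∧ z m ≠ y m then
                (1 : ℝ) / (univ.filter fun c : ZMod 3 => c ≠ x m.1 ∧ c ≠ y m).card
              else 0) := by
          refine Finset.sum_congr rfl fun x _ => Finset.sum_congr rfl fun y _ =>
            Finset.sum_congr rfl fun z _ => ?_
          by_cases h : z j = y j
          · have hz : (∏ m : Fin K × Fin d,
                (if z m ≠ x m.1 ∧ z m ≠ y m then
                  (1 : ℝ) / (univ.filter fun c : ZMod 3 => c ≠ x m.1 ∧ c ≠ y m).card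
                else 0)) = 0 := by
              refine Finset.prod_eq_zero (Finset.mem_univ j) ?_
              rw [if_neg]
              simp [h]
            rw [hz, zero_mul]
          · rw [if_pos (show (fun _x y z => y j ≠ z j) x y z from fun he => h he.symm),
              mul_one]
      _ = ∑ x : Fin K → ZMod 3, ∑ y : (Fin K × Fin d) → ZMod 3, (1:ℝ) := by
          refine Finset.sum_congr rfl fun x _ => Finset.sum_congr rfl fun y _ => ?_
          rw [sum_pi (fun m c => if c ≠ x m.1 ∧ c ≠ y m then
            (1 : ℝ) / (univ.filter fun c : ZMod 3 => c ≠ x m.1 ∧ c ≠ y m).card else 0)]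
          exact Finset.prod_eq_one fun m _ => w_sum _ _
      _ = 3 ^ K * 3 ^ (d * K) := by
          rw [Finset.sum_const, Finset.sum_const, Finset.card_univ, Finset.card_univ,
            Fintype.card_fun, Fintype.card_fun, Fintype.card_prod, Fintype.card_fin,
            Fintype.card_fin, ZMod.card]
          simp [mul_comm K d]
  have e1 : nlinPr d K (fun x _y z => x i ≠ z j) = 2/3 := by
    unfold nlinPr
    rw [div_eq_iff (ne_of_gt hden)]
    calc (∑ x : Fin K → ZMod 3, ∑ y : (Fin K × Fin d) → ZMod 3,
        ∑ z : (Fin K × Fin d) → ZMod 3,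
          (∏ m : Fin K × Fin d,
            (if z m ≠ x m.1 ∧ z m ≠ y m then
              (1 : ℝ) / (univ.filter fun c : ZMod 3 => c ≠ x m.1 ∧ c ≠ y m).card
            else 0))
          * (@ite ℝ ((fun x _y z => x i ≠ z j) x y z) (Classical.propDecidable _) 1 0))
        = ∑ x : Fin K → ZMod 3, ∑ y : (Fin K × Fin d) → ZMod 3,
          ∑ z : (Fin K × Fin d) → ZMod 3,
            (∏ m : Fin K × Fin d,
              (if z m ≠ x m.1 ∧ z m ≠ y m then
                (1 : ℝ) / (univ.filter fun c : ZMod 3 => c ≠ x m.1 ∧ c ≠ y m).card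
              else 0))
            * (if x i ≠ z j then (1:ℝ) else 0) := by
          refine Finset.sum_congr rfl fun x _ => Finset.sum_congr rfl fun y _ =>
            Finset.sum_congr rfl fun z _ => ?_
          congr 1
          exact ite_congr rfl (fun _ => rfl) (fun _ => rfl)
      _ = ∑ x : Fin K → ZMod 3, ∑ y : (Fin K × Fin d) → ZMod 3,
          ∑ c : ZMod 3,
            (if c ≠ x j.1 ∧ c ≠ y j then
              (1 : ℝ) / (univ.filter fun c : ZMod 3 => c ≠ x j.1 ∧ c ≠ y j).card
            else 0) * (if x i ≠ c then (1:ℝ) else 0) := by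
          refine Finset.sum_congr rfl fun x _ => Finset.sum_congr rfl fun y _ => ?_
          exact sum_extract
            (fun m c => if c ≠ x m.1 ∧ c ≠ y m then
              (1 : ℝ) / (univ.filter fun c : ZMod 3 => c ≠ x m.1 ∧ c ≠ y m).card else 0)
            (fun m => w_sum _ _) j (fun c => if x i ≠ c then (1:ℝ) else 0)
      _ = ∑ x : Fin K → ZMod 3,
          (3:ℝ) ^ (Fintype.card (Fin K × Fin d) - 1) * ∑ b : ZMod 3, ∑ c : ZMod 3,
            (if c ≠ x j.1 ∧ c ≠ b then
              (1 : ℝ) / (univ.filter fun c : ZMod 3 => c ≠ x j.1 ∧ c ≠ b).card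
            else 0) * (if x i ≠ c then (1:ℝ) else 0) := by
          refine Finset.sum_congr rfl fun x _ => ?_
          exact sum_coord j (fun b => ∑ c : ZMod 3,
            (if c ≠ x j.1 ∧ c ≠ b then
              (1 : ℝ) / (univ.filter fun c : ZMod 3 => c ≠ x j.1 ∧ c ≠ b).card
            else 0) * (if x i ≠ c then (1:ℝ) else 0))
      _ = (3:ℝ) ^ (K * d - 1) * ∑ x : Fin K → ZMod 3,
          (fun v a => ∑ b : ZMod 3, ∑ c : ZMod 3,
            (if c ≠ a ∧ c ≠ b then
              (1 : ℝ) / (univ.filter fun c : ZMod 3 => c ≠ a ∧ c ≠ b).card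
            else 0) * (if v ≠ c then (1:ℝ) else 0)) (x i) (x j.1) := by
          rw [← Finset.mul_sum, Fintype.card_prod, Fintype.card_fin, Fintype.card_fin]
      _ = (3:ℝ) ^ (K * d - 1) * ((3:ℝ) ^ (K - 2) * ∑ v : ZMod 3, ∑ a : ZMod 3,
            ∑ b : ZMod 3, ∑ c : ZMod 3,
            (if c ≠ a ∧ c ≠ b then
              (1 : ℝ) / (univ.filter fun c : ZMod 3 => c ≠ a ∧ c ≠ b).card
            else 0) * (if v ≠ c then (1:ℝ) else 0)) := by
          congr 1
          rw [sum_coord2 (Ne.symm hij) (fun v a => ∑ b : ZMod 3, ∑ c : ZMod 3,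
            (if c ≠ a ∧ c ≠ b then
              (1 : ℝ) / (univ.filter fun c : ZMod 3 => c ≠ a ∧ c ≠ b).card
            else 0) * (if v ≠ c then (1:ℝ) else 0)), Fintype.card_fin]
      _ = (3:ℝ) ^ (K * d - 1) * ((3:ℝ) ^ (K - 2) * 18) := by rw [S18]
      _ = 2/3 * (3 ^ K * 3 ^ (d * K)) := by
          have h3K : (3:ℝ) ^ K = 3 ^ (K - 2) * 9 := by
            rw [show (9:ℝ) = 3 ^ 2 by norm_num, ← pow_add, Nat.sub_add_cancel hK2]
          have h3L : (3:ℝ) ^ (d * K) = 3 ^ (K * d - 1) * 3 := by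
            rw [show ((3:ℝ) ^ (K * d - 1) * 3) = 3 ^ (K * d - 1) * 3 ^ 1 by norm_num,
              ← pow_add]
            have h0 : 0 < K * d := Nat.mul_pos hK hd
            rw [Nat.mul_comm d K]
            congr 1
            omega
          rw [h3K, h3L]
          ring
  rw [e1, e2]
  norm_num
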